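/- Let X be an infinite-dimensional separable F-space over ℂ, and suppose that for each m ∈ ℕ a residual subset R_m ⊆ X^m is given. Then for every ℓ ∈ ℕ there exist pairwise disjoint countable dense subsets E_1, ..., E_ℓ of X, contained in a common Mycielski set K \ {0}, such that ⋃_{j=1}^ℓ E_j is a linearly independent set. -/

import Mathlib

/-!
Closed balls are chosen stage by stage at the nodes of countably many binary trees, the `t`-th
tree growing inside the `t`-th open set from stage `t` on. All balls of stage `n` share a radius
at most `2⁻ⁿ`, lie in the balls of their parents, and are so small that any tuple of points taken
from distinct balls lies in the `n`-th dense open approximation of `R m` and is injective: finitely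
many dense open conditions on a finite tuple of centers are jointly dense open. Each tree then
carries a Cantor set, and distinct points of the union `K` of these Cantor sets eventually lie in
distinct balls, so every injective tuple from `K` lies in every approximation of `R m`.

In an infinite-dimensional F-space the linearly independent `m`-tuples form a dense open set
(finite-dimensional subspaces have empty interior; openness comes from the compactness of the
unit sphere of `ℂᵐ`), so intersecting `R m` with it makes `K` linearly independent. Indexing the
trees by pairs `(j, k)`, with the `k`-th member of a countable base as open set, and picking one
point in each Cantor set gives the sets `E j`.
-/

open Filter Topology Function Metric Set

section ExtendTuples

variable {X ι κ : Type*}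

theorem Function.Injective.extend_comp_self {σ : κ → ι} (hσ : Injective σ) (q : ι → X) :
    extend σ (q ∘ σ) q = q := by
  funext j
  by_cases hj : ∃ k, σ k = j
  · obtain ⟨k, rfl⟩ := hj
    exact hσ.extend_apply _ _ k
  · exact extend_apply' _ _ _ hj

variable [TopologicalSpace X]

theorem continuous_extend_left (σ : κ → ι) (q : ι → X) :
    Continuous fun y : κ → X => extend σ y q := by
  refine continuous_pi fun j => ?_
  by_cases hj : ∃ k, σ k = j
  · simpa only [extend, dif_pos hj] using continuous_apply _
  · simpa only [extend, dif_neg hj] using continuous_const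

theorem Dense.setOf_comp_mem {D : Set (κ → X)} (hD : Dense D) {σ : κ → ι} (hσ : Injective σ) :
    Dense {q : ι → X | q ∘ σ ∈ D} := by
  rw [dense_iff_inter_open]
  rintro U hU ⟨q, hq⟩
  have hpre : IsOpen ((fun y => Function.extend σ y q) ⁻¹' U) :=
    hU.preimage (continuous_extend_left σ q)
  obtain ⟨y, hyU, hyD⟩ :=
    hD.inter_open_nonempty _ hpre ⟨q ∘ σ, by simpa [hσ.extend_comp_self] using hq⟩
  exact ⟨Function.extend σ y q, hyU, by simpa only [mem_ofPred_eq, extend_comp hσ] using hyD⟩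

theorem isOpen_dense_setOf_forall_comp_mem [Finite ι] {G : ∀ m, Set (Fin m → X)}
    (hGo : ∀ m, IsOpen (G m)) (hGd : ∀ m, Dense (G m)) :
    IsOpen {q : ι → X | ∀ m (σ : Fin m → ι), Injective σ → q ∘ σ ∈ G m} ∧
      Dense {q : ι → X | ∀ m (σ : Fin m → ι), Injective σ → q ∘ σ ∈ G m} := by
  cases nonempty_fintype ι
  let T := Σ m : Fin (Fintype.card ι + 1), {σ : Fin m → ι // Injective σ}
  let S : T → Set (ι → X) := fun p => {q | q ∘ p.2.1 ∈ G p.1}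
  have hS : {q : ι → X | ∀ m (σ : Fin m → ι), Injective σ → q ∘ σ ∈ G m} = ⋂ p, S p := by
    ext q
    simp only [mem_ofPred_eq, mem_iInter]
    refine ⟨fun h p => h _ _ p.2.2, fun h m σ hσ => ?_⟩
    have hm : m < Fintype.card ι + 1 := by
      simpa using Nat.lt_succ_of_le (Fintype.card_le_of_injective σ hσ)
    exact h ⟨⟨m, hm⟩, σ, hσ⟩
  have hSo : ∀ p, IsOpen (S p) := fun p =>
    (hGo _).preimage (continuous_pi fun k => continuous_apply _)
  rw [hS]
  refine ⟨isOpen_iInter_of_finite hSo, ?_⟩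
  rw [← sInter_range]
  exact (finite_range S).dense_sInter (forall_mem_range.2 hSo)
    (forall_mem_range.2 fun p => (hGd _).setOf_comp_mem p.2.2)

end ExtendTuples

theorem dist_extend_le {X ι κ : Type*} [PseudoMetricSpace X] [Fintype ι] {σ : κ → ι}
    (hσ : Injective σ) {y : κ → X} {q : ι → X} {ρ : ℝ} (hρ : 0 ≤ ρ)
    (h : ∀ k, dist (y k) (q (σ k)) ≤ ρ) : dist (extend σ y q) q ≤ ρ := by
  refine (dist_pi_le_iff hρ).2 fun j => ?_
  by_cases hj : ∃ k, σ k = j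
  · obtain ⟨k, rfl⟩ := hj
    simpa only [hσ.extend_apply] using h k
  · simpa only [extend_apply' _ _ _ hj, dist_self] using hρ

section Selection

variable {X ι : Type*} [MetricSpace X] [Finite ι]

theorem exists_closedBall_forall_injective_mem {O : ι → Set X} (hOo : ∀ i, IsOpen (O i))
    (hOne : ∀ i, (O i).Nonempty) {G : ∀ m, Set (Fin m → X)} (hGo : ∀ m, IsOpen (G m))
    (hGd : ∀ m, Dense (G m)) {ε : ℝ} (hε : 0 < ε) :
    ∃ (q : ι → X) (ρ : ℝ), 0 < ρ ∧ ρ ≤ ε ∧ (∀ i, closedBall (q i) ρ ⊆ O i) ∧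
      ∀ m (σ : Fin m → ι), Injective σ →
        ∀ y : Fin m → X, (∀ k, y k ∈ closedBall (q (σ k)) ρ) → y ∈ G m := by
  cases nonempty_fintype ι
  obtain ⟨hPo, hPd⟩ := isOpen_dense_setOf_forall_comp_mem (ι := ι) hGo hGd
  have hbox : IsOpen (pi univ O) := isOpen_set_pi finite_univ fun i _ => hOo i
  obtain ⟨q, hqO, hqP⟩ := hPd.inter_open_nonempty _ hbox (univ_pi_nonempty_iff.2 hOne)
  obtain ⟨δ, hδ, hball⟩ := Metric.isOpen_iff.1 (hbox.inter hPo) q ⟨hqO, hqP⟩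
  have hρ : 0 < min (δ / 2) ε := lt_min (half_pos hδ) hε
  have hext : ∀ {κ : Type} (σ : κ → ι), Injective σ → ∀ y : κ → X,
      (∀ k, y k ∈ closedBall (q (σ k)) (min (δ / 2) ε)) → extend σ y q ∈ pi univ O ∩ _ :=
    fun σ hσ y hy => hball <| (dist_extend_le hσ hρ.le hy).trans_lt <|
      (min_le_left _ _).trans_lt (half_lt_self hδ)
  refine ⟨q, min (δ / 2) ε, hρ, min_le_right _ _, fun i x hx => ?_, fun m σ hσ y hy => ?_⟩
  · have := (hext (fun _ : Unit => i) (injective_of_subsingleton _) (fun _ => x)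
      fun _ => hx).1 i (mem_univ i)
    simpa [extend] using this
  · simpa only [extend_comp hσ] using (hext σ hσ y hy).2 m σ hσ

end Selection

section Perfect

variable {X : Type*} [TopologicalSpace X]

theorem dense_setOf_apply_ne [T1Space X] [PerfectSpace X] {κ : Type*} {i j : κ} (hij : i ≠ j) :
    Dense {x : κ → X | x i ≠ x j} := by
  classical
  rw [dense_iff_inter_open]
  rintro U hU ⟨x, hx⟩
  have hnhds : (fun z => update x i z) ⁻¹' U ∈ 𝓝[≠] (x i) :=
    mem_nhdsWithin_of_mem_nhds <| (hU.preimage (continuous_const.update i continuous_id)).mem_nhds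
      (by simpa using hx)
  have hne : ∀ᶠ z in 𝓝[≠] (x i), z ≠ x j := by
    rcases eq_or_ne (x i) (x j) with h | h
    · exact h ▸ self_mem_nhdsWithin
    · exact eventually_ne_nhdsWithin h
  obtain ⟨z, hz, hzU⟩ := (hne.and hnhds).exists
  exact ⟨update x i z, hzU, by simpa [update_of_ne hij.symm] using hz⟩

theorem isOpen_dense_setOf_injective [T2Space X] [PerfectSpace X] {κ : Type*} [Finite κ] :
    IsOpen {x : κ → X | Injective x} ∧ Dense {x : κ → X | Injective x} := by
  let S : {p : κ × κ // p.1 ≠ p.2} → Set (κ → X) := fun p => {x | x p.1.1 ≠ x p.1.2}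
  have hS : {x : κ → X | Injective x} = ⋂ p, S p := by
    ext x
    simp only [mem_ofPred_eq, mem_iInter, Injective, S]
    exact ⟨fun h p hp => p.2 (h hp), fun h a b hab => by_contra fun hne => h ⟨(a, b), hne⟩ hab⟩
  have hSo : ∀ p, IsOpen (S p) := fun p => isOpen_ne_fun (continuous_apply _) (continuous_apply _)
  rw [hS]
  refine ⟨isOpen_iInter_of_finite hSo, ?_⟩
  rw [← sInter_range]
  exact (finite_range S).dense_sInter (forall_mem_range.2 hSo)
    (forall_mem_range.2 fun p => dense_setOf_apply_ne p.2)

instance : PerfectSpace (ℕ → Bool) := by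
  refine perfectSpace_iff_forall_not_isolated.2 fun x => ?_
  let y : ℕ → ℕ → Bool := fun n => update x n (!x n)
  have hy : Tendsto y atTop (𝓝[≠] x) := by
    refine tendsto_nhdsWithin_iff.2 ⟨tendsto_pi_nhds.2 fun i => ?_, ?_⟩
    · refine tendsto_const_nhds.congr' ?_
      filter_upwards [eventually_gt_atTop i] with n hn
      simp [y, update_of_ne hn.ne]
    · refine Eventually.of_forall fun n h => ?_
      simpa [y] using congrFun h n
  exact (atTop_neBot.map y).mono hy

theorem Continuous.perfect_range {Y : Type*} [TopologicalSpace Y] [CompactSpace Y] [PerfectSpace Y]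
    [T2Space X] {f : Y → X} (hf : Continuous f) (hinj : Injective f) : Perfect (range f) := by
  refine ⟨(isCompact_range hf).isClosed, ?_⟩
  rintro _ ⟨y, rfl⟩
  simpa [map_principal, image_univ] using
    (PerfectSpace.univ_preperfect y (mem_univ y)).map hf.continuousAt hinj

end Perfect

section LinearIndependent

variable {𝕜 E : Type*} [AddCommGroup E] [TopologicalSpace E]

theorem isOpen_setOf_linearIndependent_of_rclike [RCLike 𝕜] [Module 𝕜 E] [ContinuousAdd E]
    [ContinuousSMul 𝕜 E] [T1Space E] {ι : Type*} [Finite ι] :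
    IsOpen {f : ι → E | LinearIndependent 𝕜 f} := by
  cases nonempty_fintype ι
  refine isOpen_iff_mem_nhds.2 fun f hf => ?_
  have hΦ : Continuous fun p : (ι → E) × (ι → 𝕜) => ∑ i, p.2 i • p.1 i :=
    continuous_finsetSum _ fun i _ =>
      ((continuous_apply i).comp continuous_snd).smul ((continuous_apply i).comp continuous_fst)
  -- tube lemma over the compact unit sphere of `ι → 𝕜`
  have hnear : ∀ᶠ g in 𝓝 f, ∀ a ∈ sphere (0 : ι → 𝕜) 1, ∑ i, a i • g i ≠ 0 := by
    refine (isCompact_sphere _ _).eventually_forall_of_forall_eventually fun a ha => ?_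
    refine (isOpen_compl_singleton.preimage hΦ).mem_nhds fun h0 => ?_
    have ha0 : a = 0 := funext (Fintype.linearIndependent_iff.1 hf a h0)
    simp [ha0] at ha
  filter_upwards [hnear] with g hg
  refine Fintype.linearIndependent_iff.2 fun c hc => ?_
  by_contra! hc0
  have hnorm : ‖c‖ ≠ 0 := norm_ne_zero_iff.2 (fun h => by simp [h] at hc0)
  refine hg ((‖c‖⁻¹ : 𝕜) • c) ?_ ?_
  · simp [norm_smul, hnorm]
  · simp only [Pi.smul_apply, smul_eq_mul, mul_smul, ← Finset.smul_sum, hc, smul_zero]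

variable [NontriviallyNormedField 𝕜] [Module 𝕜 E] [IsTopologicalAddGroup E] [ContinuousSMul 𝕜 E]

theorem dense_compl_span_of_finite (hinf : ¬ FiniteDimensional 𝕜 E) {s : Set E} (hs : s.Finite) :
    Dense (Submodule.span 𝕜 s : Set E)ᶜ := by
  have : FiniteDimensional 𝕜 (Submodule.span 𝕜 s) := FiniteDimensional.span_of_finite 𝕜 hs
  rw [← interior_eq_empty_iff_dense_compl, ← not_nonempty_iff_eq_empty]
  intro hint
  have : NeBot (𝓝[{x : 𝕜 | IsUnit x}] 0) := by
    simp only [isUnit_iff_ne_zero]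
    exact NormedField.nhdsNE_neBot 0
  have htop := Submodule.eq_top_of_nonempty_interior' _ hint
  exact hinf (Module.Finite.equiv ((LinearEquiv.ofEq _ _ htop).trans Submodule.topEquiv))

theorem exists_linearIndependent_forall_mem (hinf : ¬ FiniteDimensional 𝕜 E) {m : ℕ}
    {B : Fin m → Set E} (hBo : ∀ i, IsOpen (B i)) (hBne : ∀ i, (B i).Nonempty) :
    ∃ y : Fin m → E, (∀ i, y i ∈ B i) ∧ LinearIndependent 𝕜 y := by
  induction m with
  | zero => exact ⟨finZeroElim, finZeroElim, linearIndependent_empty_type⟩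
  | succ n ih =>
    obtain ⟨y, hyB, hy⟩ := ih (fun i => hBo i.castSucc) fun i => hBne i.castSucc
    obtain ⟨w, hw, hwB⟩ := (dense_compl_span_of_finite hinf (finite_range y)).exists_mem_open
      (hBo (Fin.last n)) (hBne (Fin.last n))
    refine ⟨Fin.snoc y w, Fin.lastCases ?_ fun i => ?_, linearIndependent_finSnoc.2 ⟨hy, hw⟩⟩
    · simpa using hwB
    · simpa using hyB i

theorem dense_setOf_linearIndependent (hinf : ¬ FiniteDimensional 𝕜 E) (m : ℕ) :
    Dense {y : Fin m → E | LinearIndependent 𝕜 y} := by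
  rw [dense_iff_inter_open]
  rintro U hU ⟨y₀, hy₀⟩
  obtain ⟨u, hu, huU⟩ := isOpen_pi_iff'.1 hU y₀ hy₀
  obtain ⟨y, hyu, hy⟩ := exists_linearIndependent_forall_mem hinf (fun i => (hu i).1)
    fun i => ⟨_, (hu i).2⟩
  exact ⟨y, huU fun i _ => hyu i, hy⟩

end LinearIndependent

theorem linearIndepOn_id_of_forall_injective_fin {R M : Type*} [Ring R] [AddCommGroup M]
    [Module R M] {s : Set M}
    (h : ∀ m (x : Fin m → M), (∀ k, x k ∈ s) → Injective x → LinearIndependent R x) :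
    LinearIndepOn R id s := by
  refine linearIndepOn_of_finite s fun t hts ht => ?_
  have : Finite t := ht.to_subtype
  obtain ⟨n, ⟨e⟩⟩ := Finite.exists_equiv_fin t
  have hli := h _ (fun k => (e.symm k : M)) (fun k => hts (e.symm k).2)
    (Subtype.val_injective.comp e.symm.injective)
  simpa [LinearIndepOn, Function.comp_def, Equiv.symm_apply_apply] using hli.comp e e.injective

theorem exists_isOpen_dense_iInter_subset_of_mem_residual {X : Type*} [TopologicalSpace X]
    {s : Set X} (hs : s ∈ residual X) :
    ∃ W : ℕ → Set X, (∀ n, IsOpen (W n)) ∧ (∀ n, Dense (W n)) ∧ ⋂ n, W n ⊆ s := by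
  obtain ⟨S, hSo, hSd, hSc, hSs⟩ := mem_residual_iff.1 hs
  obtain ⟨W, hW⟩ := (hSc.insert univ).exists_eq_range (insert_nonempty _ _)
  have hWS : ∀ n, W n = univ ∨ W n ∈ S := fun n => by
    rw [← mem_insert_iff, hW]
    exact mem_range_self n
  refine ⟨W, fun n => (hWS n).elim (fun h => h ▸ isOpen_univ) (hSo _),
    fun n => (hWS n).elim (fun h => h ▸ dense_univ) (hSd _), ?_⟩
  rw [← sInter_range, ← hW, sInter_insert]
  exact inter_subset_right.trans hSs

theorem eventually_injective_res {α κ : Type*} [Finite κ] {p : κ → ℕ × (ℕ → α)}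
    (hp : Injective p) :
    ∀ᶠ n in atTop, Injective fun k => ((p k).1, PiNat.res (p k).2 (n - (p k).1)) := by
  simp only [Injective, eventually_all]
  intro k k'
  by_cases hkk' : k = k'
  · exact Eventually.of_forall fun _ _ => hkk'
  rcases eq_or_ne (p k).1 (p k').1 with ht | ht
  · obtain ⟨i, hi⟩ := Function.ne_iff.1 fun hy => hkk' (hp (Prod.ext ht hy))
    filter_upwards [eventually_gt_atTop ((p k).1 + i)] with n hn h
    exact absurd (PiNat.res_eq_res.1 (by simpa [ht] using congrArg Prod.snd h) (by omega)) hi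
  · exact Eventually.of_forall fun _ h => absurd (congrArg Prod.fst h) ht

namespace Mycielski

open PiNat CantorScheme

/-- The node `(t, s)` is the vertex `s` (latest branching first) of the `t`-th binary tree;
it receives its ball at stage `t + s.length`. -/
def stage (a : ℕ × List Bool) : ℕ := a.1 + a.2.length

theorem finite_setOf_stage_eq (n : ℕ) : {a | stage a = n}.Finite :=
  ((finite_Iic n).prod (List.finite_length_le Bool n)).subset fun a (ha : stage a = n) =>
    ⟨by simp [← ha, stage], by simp only [mem_ofPred_eq, stage] at ha ⊢; omega⟩

theorem stage_res {t n : ℕ} (h : t ≤ n) (y : ℕ → Bool) : stage (t, res y (n - t)) = n := by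
  simp only [stage, res_length]
  omega

variable {X : Type*} [MetricSpace X]

def IsLayer (V : ℕ → Set X) (G : ℕ → ∀ m, Set (Fin m → X)) (n : ℕ)
    (c : ℕ × List Bool → X) (r : ℝ) : Prop :=
  0 < r ∧ r ≤ (1 / 2) ^ n ∧ closedBall (c (n, [])) r ⊆ V n ∧
    ∀ m (σ : Fin m → ℕ × List Bool), (∀ k, stage (σ k) = n) → Injective σ →
      ∀ y : Fin m → X, (∀ k, y k ∈ closedBall (c (σ k)) r) → y ∈ G n m

theorem exists_isLayer {V : ℕ → Set X} (hVo : ∀ t, IsOpen (V t))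
    (hVne : ∀ t, (V t).Nonempty) {G : ℕ → ∀ m, Set (Fin m → X)} (hGo : ∀ n m, IsOpen (G n m))
    (hGd : ∀ n m, Dense (G n m)) (n : ℕ) (c : ℕ × List Bool → X) {r : ℝ} (hr : 0 < r) :
    ∃ c' r', IsLayer V G n c' r' ∧ ∀ t b s, stage (t, s) + 1 = n →
      closedBall (c' (t, b :: s)) r' ⊆ closedBall (c (t, s)) r := by
  classical
  have : Finite {a // stage a = n} := (finite_setOf_stage_eq n).to_subtype
  let O : {a // stage a = n} → Set X := fun a =>
    match a.1.2 with
    | [] => V n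
    | _ :: s => ball (c (a.1.1, s)) r
  have hO : ∀ a, IsOpen (O a) ∧ (O a).Nonempty := fun a => by
    rcases a with ⟨⟨t, _ | ⟨b, s⟩⟩, ha⟩
    exacts [⟨hVo n, hVne n⟩, ⟨isOpen_ball, nonempty_ball.2 hr⟩]
  obtain ⟨q, ρ, hρ, hρn, hqO, hqG⟩ := exists_closedBall_forall_injective_mem
    (fun a => (hO a).1) (fun a => (hO a).2) (hGo n) (hGd n) (by positivity : (0 : ℝ) < (1 / 2) ^ n)
  let c' : ℕ × List Bool → X := fun a => if h : stage a = n then q ⟨a, h⟩ else c a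
  have hc' : ∀ a (h : stage a = n), c' a = q ⟨a, h⟩ := fun a h => dif_pos h
  refine ⟨c', ρ, ⟨hρ, hρn, ?_, fun m σ hσn hσ y hy => ?_⟩, fun t b s hs => ?_⟩
  · rw [hc' _ (by simp [stage])]
    exact hqO ⟨(n, []), _⟩
  · refine hqG m (fun k => ⟨σ k, hσn k⟩) (fun k k' h => hσ congr(($h).1)) y fun k => ?_
    simpa only [hc' _ (hσn k)] using hy k
  · rw [hc' _ (by simp only [stage, List.length_cons] at hs ⊢; omega)]
    exact (hqO ⟨(t, b :: s), _⟩).trans ball_subset_closedBall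

/-- Closed balls at the nodes of the forest; the `t`-th tree carves out the `t`-th Cantor set. -/
structure Scheme (V : ℕ → Set X) (G : ℕ → ∀ m, Set (Fin m → X)) where
  center : ℕ × List Bool → X
  radius : ℕ → ℝ
  radius_pos : ∀ n, 0 < radius n
  radius_le : ∀ n, radius n ≤ (1 / 2) ^ n
  root_subset : ∀ t, closedBall (center (t, [])) (radius t) ⊆ V t
  cons_subset : ∀ t b s, closedBall (center (t, b :: s)) (radius (stage (t, s) + 1)) ⊆
    closedBall (center (t, s)) (radius (stage (t, s)))
  mem_of_injective : ∀ n m (σ : Fin m → ℕ × List Bool), (∀ k, stage (σ k) = n) → Injective σ →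
    ∀ y : Fin m → X, (∀ k, y k ∈ closedBall (center (σ k)) (radius n)) → y ∈ G n m

theorem nonempty_scheme {V : ℕ → Set X} (hVo : ∀ t, IsOpen (V t))
    (hVne : ∀ t, (V t).Nonempty) {G : ℕ → ∀ m, Set (Fin m → X)} (hGo : ∀ n m, IsOpen (G n m))
    (hGd : ∀ n m, Dense (G n m)) : Nonempty (Scheme V G) := by
  obtain ⟨x₀, -⟩ := hVne 0
  have : Nonempty X := ⟨x₀⟩
  obtain ⟨c₀, r₀, h₀, -⟩ := exists_isLayer hVo hVne hGo hGd 0 (fun _ => x₀) one_pos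
  choose! c r hL hnest using fun n c r (h : IsLayer V G n c r) =>
    exists_isLayer hVo hVne hGo hGd (n + 1) c h.1
  let L : ℕ → (ℕ × List Bool → X) × ℝ := fun n =>
    Nat.rec (c₀, r₀) (fun n p => (c n p.1 p.2, r n p.1 p.2)) n
  have hL' : ∀ n, IsLayer V G n (L n).1 (L n).2 := fun n => by
    induction n with
    | zero => exact h₀
    | succ n ih => exact hL n _ _ ih
  exact ⟨{
    center a := (L (stage a)).1 a
    radius n := (L n).2
    radius_pos n := (hL' n).1
    radius_le n := (hL' n).2.1
    root_subset t := (hL' t).2.2.1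
    cons_subset t b s := hnest _ _ _ (hL' _) t b s rfl
    mem_of_injective n m σ hσn hσ y hy :=
      (hL' n).2.2.2 m σ hσn hσ y fun k => by simpa only [hσn k] using hy k }⟩

end Mycielski

namespace Mycielski.Scheme

open PiNat CantorScheme

variable {X : Type*} [MetricSpace X] {V : ℕ → Set X} {G : ℕ → ∀ m, Set (Fin m → X)}
  (S : Scheme V G)

def ball (a : ℕ × List Bool) : Set X := closedBall (S.center a) (S.radius (stage a))

theorem disjoint_ball (hG : ∀ n m, G n m ⊆ {y | Injective y}) {a a' : ℕ × List Bool}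
    (h : stage a = stage a') (hne : a ≠ a') : Disjoint (S.ball a) (S.ball a') := by
  refine disjoint_left.2 fun x hx hx' => ?_
  have hσ : Injective ![a, a'] := by
    intro i j
    fin_cases i <;> fin_cases j <;> simp [hne, hne.symm]
  have hxx := hG _ _ (S.mem_of_injective _ 2 ![a, a'] (Fin.forall_fin_two.2 ⟨rfl, h.symm⟩) hσ
    ![x, x] (Fin.forall_fin_two.2 ⟨hx, h ▸ hx'⟩))
  exact zero_ne_one (hxx rfl)

theorem vanishingDiam (t : ℕ) : VanishingDiam fun l => S.ball (t, l) := by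
  intro y
  have hlim : Tendsto (fun n : ℕ => ENNReal.ofReal (2 * (1 / 2) ^ n)) atTop (𝓝 0) := by
    simpa using ENNReal.tendsto_ofReal
      ((tendsto_pow_atTop_nhds_zero_of_lt_one (r := (1 / 2 : ℝ)) (by norm_num)
        (by norm_num)).const_mul 2)
  refine tendsto_of_tendsto_of_tendsto_of_le_of_le tendsto_const_nhds hlim (fun _ => zero_le)
    fun n => ediam_le_of_forall_dist_le fun x hx z hz => ?_
  have hr : S.radius (stage (t, res y n)) ≤ (1 / 2) ^ n := by
    refine (S.radius_le _).trans (pow_le_pow_of_le_one (by norm_num) (by norm_num) ?_)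
    simp [stage, res_length]
  linarith [dist_triangle_right x z (S.center (t, res y n)), mem_closedBall.1 hx,
    mem_closedBall.1 hz]

theorem closureAntitone (t : ℕ) : ClosureAntitone fun l => S.ball (t, l) :=
  fun l b => isClosed_closedBall.closure_eq.trans_subset (S.cons_subset t b l)

variable [CompleteSpace X]

theorem inducedMap_eq_univ (t : ℕ) :
    (inducedMap fun l => S.ball (t, l)).1 = univ :=
  (S.closureAntitone t).map_of_vanishingDiam (S.vanishingDiam t)
    fun _ => nonempty_closedBall.2 (S.radius_pos _).le

noncomputable def point (t : ℕ) (y : ℕ → Bool) : X :=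
  (inducedMap fun l => S.ball (t, l)).2 ⟨y, S.inducedMap_eq_univ t ▸ mem_univ y⟩

theorem point_mem_ball (t : ℕ) (y : ℕ → Bool) (n : ℕ) : S.point t y ∈ S.ball (t, res y n) :=
  map_mem _ n

theorem continuous_point (t : ℕ) : Continuous (S.point t) :=
  (S.vanishingDiam t).map_continuous.comp (continuous_id.subtype_mk _)

theorem injective_point (hG : ∀ n m, G n m ⊆ {y | Injective y}) (t : ℕ) :
    Injective (S.point t) := by
  refine (Disjoint.map_injective fun l b b' hbb' => S.disjoint_ball hG (a := (t, b :: l))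
    (a' := (t, b' :: l)) rfl ?_).comp fun y y' h => congrArg Subtype.val h
  simpa using hbb'

theorem exists_ge_mem_of_injective {m : ℕ} {x : Fin m → X}
    (hx : ∀ k, x k ∈ ⋃ t, range (S.point t)) (hinj : Injective x) (j : ℕ) :
    ∃ n ≥ j, x ∈ G n m := by
  simp only [mem_iUnion, mem_range] at hx
  choose t y hy using hx
  have hp : Injective fun k => (t k, y k) := fun k k' h => hinj <| by
    simp only [← hy, Prod.mk.injEq] at h ⊢
    rw [h.1, h.2]
  obtain ⟨n, hjn, htn, hσ⟩ := ((eventually_ge_atTop j).and <|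
    (eventually_all.2 fun k => eventually_ge_atTop (t k)).and (eventually_injective_res hp)).exists
  refine ⟨n, hjn, S.mem_of_injective n m _ (fun k => stage_res (htn k) _) hσ x fun k => ?_⟩
  have := S.point_mem_ball (t k) (y k) (n - t k)
  rwa [hy, ball, stage_res (htn k)] at this

end Mycielski.Scheme

theorem exists_seq_isOpen_nonempty_subset (X : Type*) [TopologicalSpace X]
    [SecondCountableTopology X] [Nonempty X] :
    ∃ B : ℕ → Set X, (∀ k, IsOpen (B k)) ∧ (∀ k, (B k).Nonempty) ∧
      ∀ U : Set X, IsOpen U → U.Nonempty → ∃ k, B k ⊆ U := by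
  obtain ⟨b, hbc, hbe, hb⟩ := TopologicalSpace.exists_countable_basis X
  obtain ⟨B, rfl⟩ := hbc.exists_eq_range <|
    let ⟨v, hv, _⟩ := hb.exists_subset_of_mem_open (mem_univ (Classical.arbitrary X)) isOpen_univ
    ⟨v, hv⟩
  refine ⟨B, fun k => hb.isOpen (mem_range_self k),
    fun k => nonempty_iff_ne_empty.2 fun h => hbe (h ▸ mem_range_self k), fun U hU ⟨x, hx⟩ => ?_⟩
  obtain ⟨_, ⟨k, rfl⟩, -, hk⟩ := hb.exists_subset_of_mem_open hx hU
  exact ⟨k, hk⟩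

section Mycielski

variable {X : Type*} [MetricSpace X] [CompleteSpace X] [PerfectSpace X]

theorem exists_perfect_forall_injective_mem {V : ℕ → Set X} (hVo : ∀ t, IsOpen (V t))
    (hVne : ∀ t, (V t).Nonempty) {R : ∀ m, Set (Fin m → X)} (hR : ∀ m, R m ∈ residual (Fin m → X)) :
    ∃ C : ℕ → Set X, (∀ t, (C t).Nonempty ∧ Perfect (C t) ∧ IsCompact (C t) ∧ C t ⊆ V t) ∧
      Pairwise (Disjoint on C) ∧
      ∀ m (x : Fin m → X), (∀ k, x k ∈ ⋃ t, C t) → Injective x → x ∈ R m := by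
  choose W hWo hWd hWR using fun m => exists_isOpen_dense_iInter_subset_of_mem_residual (hR m)
  let G : ℕ → ∀ m, Set (Fin m → X) := fun n m => (⋂ k ∈ Iic n, W m k) ∩ {x | Injective x}
  have hWo' : ∀ n m, IsOpen (⋂ k ∈ Iic n, W m k) := fun n m =>
    (finite_Iic n).isOpen_biInter fun k _ => hWo m k
  have hGo : ∀ n m, IsOpen (G n m) := fun n m => (hWo' n m).inter isOpen_dense_setOf_injective.1
  have hGd : ∀ n m, Dense (G n m) := fun n m =>
    (dense_biInter_of_isOpen (fun k _ => hWo m k) (to_countable _) fun k _ => hWd m k)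
      |>.inter_of_isOpen_left isOpen_dense_setOf_injective.2 (hWo' n m)
  have hG : ∀ n m, G n m ⊆ {x | Injective x} := fun n m => inter_subset_right
  obtain ⟨S⟩ := Mycielski.nonempty_scheme hVo hVne hGo hGd
  refine ⟨fun t => range (S.point t), fun t => ⟨range_nonempty _,
    (S.continuous_point t).perfect_range (S.injective_point hG t),
    isCompact_range (S.continuous_point t),
    range_subset_iff.2 fun y => S.root_subset t (S.point_mem_ball t y 0)⟩, fun t t' htt' => ?_,
    fun m x hx hinj => hWR m (mem_iInter.2 fun k => ?_)⟩
  · refine disjoint_range_iff.2 fun y y' => ?_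
    have hstage := (Mycielski.stage_res (le_max_left t t') y).trans
      (Mycielski.stage_res (le_max_right t t') y').symm
    exact (S.disjoint_ball hG hstage fun h => htt' congr(($h).1)).ne_of_mem
      (S.point_mem_ball t y _) (S.point_mem_ball t' y' _)
  · obtain ⟨n, hkn, hxG⟩ := S.exists_ge_mem_of_injective hx hinj k
    exact mem_iInter₂.1 hxG.1 k hkn

theorem exists_disjoint_dense_subset_forall_injective_mem [SecondCountableTopology X]
    [Nonempty X] {R : ∀ m, Set (Fin m → X)} (hR : ∀ m, R m ∈ residual (Fin m → X)) (ℓ : ℕ) :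
    ∃ (K : Set X) (E : Fin ℓ → Set X),
      (∀ U : Set X, IsOpen U → U.Nonempty →
        ∃ C : Set X, C ⊆ K ∩ U ∧ C.Nonempty ∧ Perfect C ∧ IsCompact C) ∧
      (∀ m (x : Fin m → X), (∀ i, x i ∈ K) → Injective x → x ∈ R m) ∧
      (∀ j, E j ⊆ K) ∧ (∀ j, (E j).Countable) ∧ (∀ j, Dense (E j)) ∧ Pairwise (Disjoint on E) := by
  obtain ⟨B, hBo, hBne, hBU⟩ := exists_seq_isOpen_nonempty_subset X
  obtain ⟨C, hC, hdisj, hCR⟩ := exists_perfect_forall_injective_mem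
    (V := fun n => B n.unpair.2) (fun n => hBo _) (fun n => hBne _) hR
  choose x hx using fun n => (hC n).1
  have hxB : ∀ j k, x (Nat.pair j k) ∈ B k := fun j k => by
    simpa using (hC (Nat.pair j k)).2.2.2 (hx _)
  have hxinj : Injective x := fun n n' h => hdisj.eq (not_disjoint_iff.2 ⟨x n, hx n, h ▸ hx n'⟩)
  refine ⟨⋃ n, C n, fun j => range fun k => x (Nat.pair j k), fun U hU hne => ?_, hCR,
    fun j => range_subset_iff.2 fun k => mem_iUnion_of_mem _ (hx _), fun j => countable_range _,
    fun j => dense_iff_inter_open.2 fun U hU hne => ?_, fun j j' hjj' => ?_⟩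
  · obtain ⟨k, hk⟩ := hBU U hU hne
    refine ⟨C (Nat.pair 0 k), subset_inter (subset_iUnion C _) ((hC _).2.2.2.trans ?_),
      (hC _).1, (hC _).2.1, (hC _).2.2.1⟩
    simpa using hk
  · obtain ⟨k, hk⟩ := hBU U hU hne
    exact ⟨_, hk (hxB j k), mem_range_self k⟩
  · refine disjoint_range_iff.2 fun k k' h => hjj' (Fin.ext ?_)
    simpa using congrArg (fun n => n.unpair.1) (hxinj h)

end Mycielski

/-- Let `X` be an infinite-dimensional separable F-space over ℂ and let
`R m` be a residual subset of `X^m` for each `m`. Then for every `ℓ` there exist a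
Mycielski set `K` (every tuple of pairwise distinct points of `K` lies in the
corresponding `R m`, and `K` meets every nonempty open set in a Cantor set) and
pairwise disjoint countable dense subsets `E 1, ..., E ℓ` of `X` contained in
`K ∖ {0}` whose union is linearly independent. -/
theorem exists_disjoint_dense_linearIndependent
    {X : Type*} [AddCommGroup X] [Module ℂ X] [MetricSpace X] [CompleteSpace X]
    [IsTopologicalAddGroup X] [ContinuousSMul ℂ X] [TopologicalSpace.SeparableSpace X]
    (hinf : ¬ FiniteDimensional ℂ X)
    (R : (m : ℕ) → Set (Fin m → X))
    (hR : ∀ m, R m ∈ residual (Fin m → X)) :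
    ∀ ℓ : ℕ, ∃ (K : Set X) (E : Fin ℓ → Set X),
      (∀ U : Set X, IsOpen U → U.Nonempty →
        ∃ C : Set X, C ⊆ K ∩ U ∧ C.Nonempty ∧ Perfect C ∧ IsCompact C) ∧
      (∀ (m : ℕ) (x : Fin m → X), (∀ i, x i ∈ K) → Function.Injective x → x ∈ R m) ∧
      (∀ j, E j ⊆ K \ {0}) ∧
      (∀ j, (E j).Countable) ∧
      (∀ j, Dense (E j)) ∧
      (Pairwise fun j j' => Disjoint (E j) (E j')) ∧
      LinearIndependent ℂ (fun v : ↥(⋃ j, E j) => (v : X)) := by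
  intro ℓ
  have : Nontrivial X := not_subsingleton_iff_nontrivial.1 fun _ => hinf inferInstance
  have : PerfectSpace X := perfectSpace_of_module ℂ X
  have hLI : ∀ m, {x : Fin m → X | LinearIndependent ℂ x} ∈ residual (Fin m → X) := fun m =>
    residual_of_dense_open isOpen_setOf_linearIndependent_of_rclike
      (dense_setOf_linearIndependent hinf m)
  obtain ⟨K, E, hKC, hKR, hEK, hEc, hEd, hEdisj⟩ :=
    exists_disjoint_dense_subset_forall_injective_mem
      (R := fun m => R m ∩ {x | LinearIndependent ℂ x}) (fun m => inter_mem (hR m) (hLI m)) ℓ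
  have hK : LinearIndepOn ℂ id K :=
    linearIndepOn_id_of_forall_injective_fin fun m x hx hinj => (hKR m x hx hinj).2
  exact ⟨K, E, hKC, fun m x hx hinj => (hKR m x hx hinj).1,
    fun j v hv => ⟨hEK j hv, hK.ne_zero (hEK j hv)⟩, hEc, hEd, hEdisj, hK.mono (iUnion_subset hEK)⟩
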